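/- arXiv:1706.00313 — 2 statements merged into one kernel-verified Lean document; each statement's English description precedes it below -/
import Mathlib

section
/- Let a, b, c ∈ ℤ with 0 ≤ a < m, 0 ≤ b ≤ q and c ≥ 0, and set k := a + m(b + (q+1)c). Then k ≥ 1 and m(q+1)·((q−1)·⌈k/(m(q+1))⌉ + q(q−1)·⌈k/m⌉) > q³·k if and only if exactly one of the following two conditions holds: (i) a = 0, 0 < b ≤ q−1 and 0 ≤ c ≤ q−1−b; (ii) 0 < a < m, 0 ≤ b ≤ q, 0 ≤ c ≤ q²−1−b+⌊b/(q+1) − q³a/(m(q+1))⌋ and b − ⌊b/(q+1) − q³a/(m(q+1))⌋ ≤ q²−1. (Here the condition k ≥ 1 excludes a + mb = 0 together with c = 0; when a + mb = 0 and c > 0 the inequality fails.) -/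
/-!
Write `k = a + m b + m(q+1) c`. For `0 ≤ a < m` and `0 ≤ b ≤ q` both ceilings are explicit,
`⌈k/(m(q+1))⌉ = c + [a + m b > 0]` and `⌈k/m⌉ = b + (q+1) c + [a > 0]`, so the gap inequality
becomes linear in `c`. For `a = 0` it reads `q b < (q+1)(q-1-c)`. For `a > 0` it reads
`(c - (q² - 1 - b)) · m(q+1) < b m - q³ a`; since `q` is prime to `m = (qⁿ+1)/(q+1)`, the right
side is not a multiple of `m(q+1)`, so the strict inequality is the floor bound of (ii).
-/

section FloorRing

variable {α : Type*} [Field α] [LinearOrder α] [IsStrictOrderedRing α] [FloorRing α]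

theorem Int.ceil_intCast_div_of_eq_add_mul {x r d v : ℤ} (hd : d ≠ 0) (hx : x = r + d * v) :
    ⌈(x : α) / d⌉ = ⌈(r : α) / d⌉ + v := by
  have hd' : (d : α) ≠ 0 := by exact_mod_cast hd
  rw [hx, Int.cast_add, add_div, Int.cast_mul, mul_div_cancel_left₀ _ hd', Int.ceil_add_intCast]

theorem Int.ceil_intCast_div_eq_one {x d : ℤ} (hx : 0 < x) (hxd : x ≤ d) :
    ⌈(x : α) / d⌉ = 1 := by
  have hd : (0 : α) < d := by exact_mod_cast hx.trans_le hxd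
  rw [Int.ceil_eq_iff, Int.cast_one, sub_self, div_le_one hd]
  exact ⟨div_pos (by exact_mod_cast hx) hd, by exact_mod_cast hxd⟩

theorem Int.mul_lt_iff_le_floor_div_of_not_dvd {n x d : ℤ} (hd : 0 < d) (hdx : ¬ d ∣ x) :
    n * d < x ↔ n ≤ ⌊(x : α) / d⌋ := by
  rw [Int.le_floor, le_div_iff₀ (by exact_mod_cast hd)]
  norm_cast
  exact ⟨le_of_lt, fun h => h.lt_of_ne fun e => hdx ⟨n, by rw [← e, mul_comm]⟩⟩

end FloorRing

theorem isCoprime_self_pow_add_one {R : Type*} [CommRing R] (q : R) {n : ℕ} (hn : n ≠ 0) :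
    IsCoprime q (q ^ n + 1) := by
  obtain ⟨n, rfl⟩ := Nat.exists_eq_add_one_of_ne_zero hn
  exact ⟨-q ^ n, 1, by ring⟩

namespace GGS

/-- The gap criterion at `P₀`, multiplied through by `m(q+1)`. -/
def IsGapAtP0 (q : ℕ) (m k : ℤ) : Prop :=
  1 ≤ k ∧ (q : ℤ) ^ 3 * k <
    m * ((q : ℤ) + 1) * (((q : ℤ) - 1) * ⌈(k : ℚ) / ((m * ((q : ℤ) + 1) : ℤ) : ℚ)⌉
      + (q : ℤ) * ((q : ℤ) - 1) * ⌈(k : ℚ) / ((m : ℤ) : ℚ)⌉)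

variable {q : ℕ} {m a b c : ℤ}

theorem not_isGapAtP0_mul (hm : 0 < m) : ¬ IsGapAtP0 q m (m * ((q : ℤ) + 1) * c) := by
  rintro ⟨hk, hlt⟩
  have hM : m * ((q : ℤ) + 1) ≠ 0 := by positivity
  rw [Int.ceil_intCast_div_of_eq_add_mul (r := 0) (v := c) hM (by ring),
    Int.ceil_intCast_div_of_eq_add_mul (r := 0) (v := ((q : ℤ) + 1) * c) hm.ne' (by ring)]
    at hlt
  simp only [Int.cast_zero, zero_div, Int.ceil_zero, zero_add] at hlt
  nlinarith

theorem mul_lt_add_one_mul_sub_iff {q b c : ℤ} (hb : 0 < b) (hbq : b ≤ q) :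
    q * b < (q + 1) * (q - 1 - c) ↔ c ≤ q - 1 - b :=
  ⟨fun h => by by_contra! hc; nlinarith, fun h => by nlinarith⟩

theorem isGapAtP0_mul_iff (hm : 0 < m) (hb : 0 < b) (hbq : b ≤ q) (hc : 0 ≤ c) :
    IsGapAtP0 q m (m * (b + ((q : ℤ) + 1) * c)) ↔ c ≤ (q : ℤ) - 1 - b := by
  have hM : 0 < m * ((q : ℤ) + 1) := by positivity
  have hceilM : ⌈((m * (b + ((q : ℤ) + 1) * c) : ℤ) : ℚ) / ((m * ((q : ℤ) + 1) : ℤ) : ℚ)⌉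
      = 1 + c := by
    rw [Int.ceil_intCast_div_of_eq_add_mul (r := m * b) (v := c) hM.ne' (by ring),
      Int.ceil_intCast_div_eq_one (by positivity) (by nlinarith)]
  have hceilm : ⌈((m * (b + ((q : ℤ) + 1) * c) : ℤ) : ℚ) / ((m : ℤ) : ℚ)⌉
      = b + ((q : ℤ) + 1) * c := by
    rw [Int.ceil_intCast_div_of_eq_add_mul (r := 0) (v := b + ((q : ℤ) + 1) * c) hm.ne'
      (by ring)]
    simp
  have hk : 1 ≤ m * (b + ((q : ℤ) + 1) * c) := by nlinarith
  have hexcess : m * ((q : ℤ) + 1) * (((q : ℤ) - 1) * (1 + c)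
      + (q : ℤ) * ((q : ℤ) - 1) * (b + ((q : ℤ) + 1) * c))
      - (q : ℤ) ^ 3 * (m * (b + ((q : ℤ) + 1) * c))
      = m * (((q : ℤ) + 1) * ((q : ℤ) - 1 - c) - q * b) := by ring
  rw [IsGapAtP0, hceilM, hceilm, and_iff_right hk, ← sub_pos, hexcess,
    mul_pos_iff_of_pos_left hm, sub_pos, mul_lt_add_one_mul_sub_iff hb hbq]

theorem not_dvd_mul_sub_pow_mul (hqm : IsCoprime (q : ℤ) m) (ha : 0 < a) (ham : a < m) :
    ¬ m * ((q : ℤ) + 1) ∣ b * m - (q : ℤ) ^ 3 * a := by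
  intro h
  have hdvd : m ∣ (q : ℤ) ^ 3 * a := by
    simpa using (dvd_mul_left m b).sub ((dvd_mul_right m _).trans h)
  exact absurd (Int.le_of_dvd ha ((hqm.pow_left.symm).dvd_of_dvd_mul_left hdvd)) ham.not_ge

theorem isGapAtP0_iff_of_pos (hqm : IsCoprime (q : ℤ) m) (ha : 0 < a) (ham : a < m)
    (hb : 0 ≤ b) (hbq : b ≤ q) (hc : 0 ≤ c) :
    IsGapAtP0 q m (a + m * (b + ((q : ℤ) + 1) * c)) ↔
      c ≤ (q : ℤ) ^ 2 - 1 - b +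
        ⌊((b : ℤ) : ℚ) / ((q : ℚ) + 1)
          - (((q : ℤ) ^ 3 * a : ℤ) : ℚ) / ((m * ((q : ℤ) + 1) : ℤ) : ℚ)⌋ := by
  have hm : 0 < m := ha.trans ham
  have hM : 0 < m * ((q : ℤ) + 1) := by positivity
  have hceilM :
      ⌈((a + m * (b + ((q : ℤ) + 1) * c) : ℤ) : ℚ) / ((m * ((q : ℤ) + 1) : ℤ) : ℚ)⌉ = 1 + c := by
    rw [Int.ceil_intCast_div_of_eq_add_mul (r := a + m * b) (v := c) hM.ne' (by ring),
      Int.ceil_intCast_div_eq_one (by positivity) (by nlinarith)]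
  have hceilm : ⌈((a + m * (b + ((q : ℤ) + 1) * c) : ℤ) : ℚ) / ((m : ℤ) : ℚ)⌉
      = 1 + (b + ((q : ℤ) + 1) * c) := by
    rw [Int.ceil_intCast_div_of_eq_add_mul (r := a) (v := b + ((q : ℤ) + 1) * c) hm.ne' rfl,
      Int.ceil_intCast_div_eq_one ha ham.le]
  have hfloor : ((b : ℤ) : ℚ) / ((q : ℚ) + 1)
      - (((q : ℤ) ^ 3 * a : ℤ) : ℚ) / ((m * ((q : ℤ) + 1) : ℤ) : ℚ)
      = ((b * m - (q : ℤ) ^ 3 * a : ℤ) : ℚ) / ((m * ((q : ℤ) + 1) : ℤ) : ℚ) := by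
    have : (m : ℚ) ≠ 0 := by exact_mod_cast hm.ne'
    push_cast
    field_simp
  have hk : 1 ≤ a + m * (b + ((q : ℤ) + 1) * c) := by nlinarith
  have hexcess : m * ((q : ℤ) + 1) * (((q : ℤ) - 1) * (1 + c)
      + (q : ℤ) * ((q : ℤ) - 1) * (1 + (b + ((q : ℤ) + 1) * c)))
      - (q : ℤ) ^ 3 * (a + m * (b + ((q : ℤ) + 1) * c))
      = (b * m - (q : ℤ) ^ 3 * a) - (c - ((q : ℤ) ^ 2 - 1 - b)) * (m * ((q : ℤ) + 1)) := by
    ring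
  rw [IsGapAtP0, hceilM, hceilm, and_iff_right hk, ← sub_pos, hexcess, sub_pos, hfloor,
    Int.mul_lt_iff_le_floor_div_of_not_dvd (α := ℚ) hM (not_dvd_mul_sub_pow_mul hqm ha ham)]
  constructor <;> intro h <;> linarith

end GGS

theorem gap_at_P0_general (q n : ℕ) (hn1 : 1 < n)
    (m : ℤ) (hm : m * ((q : ℤ) + 1) = (q : ℤ) ^ n + 1)
    (a b c : ℤ) (ha0 : 0 ≤ a) (ham : a < m) (hb0 : 0 ≤ b) (hbq : b ≤ (q : ℤ)) (hc0 : 0 ≤ c) :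
    (1 ≤ a + m * (b + ((q : ℤ) + 1) * c) ∧
        (q : ℤ) ^ 3 * (a + m * (b + ((q : ℤ) + 1) * c)) <
          m * ((q : ℤ) + 1) *
            (((q : ℤ) - 1) * ⌈((a + m * (b + ((q : ℤ) + 1) * c) : ℤ) : ℚ)
                / ((m * ((q : ℤ) + 1) : ℤ) : ℚ)⌉
              + (q : ℤ) * ((q : ℤ) - 1) * ⌈((a + m * (b + ((q : ℤ) + 1) * c) : ℤ) : ℚ)
                / ((m : ℤ) : ℚ)⌉)) ↔
      Xor'
        (a = 0 ∧ 0 < b ∧ b ≤ (q : ℤ) - 1 ∧ 0 ≤ c ∧ c ≤ (q : ℤ) - 1 - b)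
        (0 < a ∧ a < m ∧ 0 ≤ b ∧ b ≤ (q : ℤ) ∧ 0 ≤ c ∧
          c ≤ (q : ℤ) ^ 2 - 1 - b +
              ⌊((b : ℤ) : ℚ) / ((q : ℚ) + 1)
                - (((q : ℤ) ^ 3 * a : ℤ) : ℚ) / ((m * ((q : ℤ) + 1) : ℤ) : ℚ)⌋ ∧
          b - ⌊((b : ℤ) : ℚ) / ((q : ℚ) + 1)
                - (((q : ℤ) ^ 3 * a : ℤ) : ℚ) / ((m * ((q : ℤ) + 1) : ℤ) : ℚ)⌋
            ≤ (q : ℤ) ^ 2 - 1) := by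
  have hm0 : 0 < m := ha0.trans_lt ham
  change GGS.IsGapAtP0 q m _ ↔ Xor _ _
  rcases ha0.eq_or_lt with rfl | ha
  · rcases hb0.eq_or_lt with rfl | hb
    · rw [show (0 : ℤ) + m * (0 + ((q : ℤ) + 1) * c) = m * ((q : ℤ) + 1) * c by ring]
      exact iff_of_false (GGS.not_isGapAtP0_mul hm0) (by simp)
    · rw [zero_add, GGS.isGapAtP0_mul_iff hm0 hb hbq hc0]
      refine ⟨fun h => .inl ⟨⟨rfl, hb, by omega, hc0, h⟩, fun h' => h'.1.false⟩, ?_⟩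
      rintro (⟨⟨-, -, -, -, h⟩, -⟩ | ⟨⟨h, -⟩, -⟩)
      exacts [h, h.false.elim]
  · have hqm : IsCoprime (q : ℤ) m :=
      (isCoprime_self_pow_add_one (q : ℤ) (by omega : n ≠ 0)).of_isCoprime_of_dvd_right
        (Dvd.intro _ hm)
    rw [GGS.isGapAtP0_iff_of_pos hqm ha ham hb0 hbq hc0]
    refine ⟨fun h => .inr ⟨⟨ha, ham, hb0, hbq, hc0, h, by linarith⟩, fun h' => ha.ne' h'.1⟩, ?_⟩
    rintro (⟨⟨rfl, -⟩, -⟩ | ⟨⟨-, -, -, -, -, h, -⟩, -⟩)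
    exacts [ha.false.elim, h]

/-- Characterization of the Weierstrass gaps at `P₀`: for `k = a + m(b + (q+1)c)` with
`0 ≤ a < m`, `0 ≤ b ≤ q`, `c ≥ 0`, one has `k ≥ 1` and
`m(q+1)((q-1)⌈k/(m(q+1))⌉ + q(q-1)⌈k/m⌉) > q³ k` iff exactly one of the conditions (i),
(ii) holds. -/
theorem gap_at_P0 (q n : ℕ) (hq : IsPrimePow q) (hn : Odd n) (hn1 : 1 < n)
    (m : ℤ) (hm : m * ((q : ℤ) + 1) = (q : ℤ) ^ n + 1)
    (a b c : ℤ) (ha0 : 0 ≤ a) (ham : a < m) (hb0 : 0 ≤ b) (hbq : b ≤ (q : ℤ)) (hc0 : 0 ≤ c) :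
    (1 ≤ a + m * (b + ((q : ℤ) + 1) * c) ∧
        (q : ℤ) ^ 3 * (a + m * (b + ((q : ℤ) + 1) * c)) <
          m * ((q : ℤ) + 1) *
            (((q : ℤ) - 1) * ⌈((a + m * (b + ((q : ℤ) + 1) * c) : ℤ) : ℚ)
                / ((m * ((q : ℤ) + 1) : ℤ) : ℚ)⌉
              + (q : ℤ) * ((q : ℤ) - 1) * ⌈((a + m * (b + ((q : ℤ) + 1) * c) : ℤ) : ℚ)
                / ((m : ℤ) : ℚ)⌉)) ↔
      Xor'
        (a = 0 ∧ 0 < b ∧ b ≤ (q : ℤ) - 1 ∧ 0 ≤ c ∧ c ≤ (q : ℤ) - 1 - b)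
        (0 < a ∧ a < m ∧ 0 ≤ b ∧ b ≤ (q : ℤ) ∧ 0 ≤ c ∧
          c ≤ (q : ℤ) ^ 2 - 1 - b +
              ⌊((b : ℤ) : ℚ) / ((q : ℚ) + 1)
                - (((q : ℤ) ^ 3 * a : ℤ) : ℚ) / ((m * ((q : ℤ) + 1) : ℤ) : ℚ)⌋ ∧
          b - ⌊((b : ℤ) : ℚ) / ((q : ℚ) + 1)
                - (((q : ℤ) ^ 3 * a : ℤ) : ℚ) / ((m * ((q : ℤ) + 1) : ℤ) : ℚ)⌋
            ≤ (q : ℤ) ^ 2 - 1) :=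
  gap_at_P0_general q n hn1 m hm a b c ha0 ham hb0 hbq hc0
end

section
/- For s_0, s_1, …, s_{q²−1} ∈ ℤ and t ∈ ℤ, define Γ_{s_0,(s_1,…,s_{q²−1}),t} := Ω_{r,s,t} where r = (s_0, s_0, …, s_0) ∈ ℤ^q is the constant vector and s = (s_1,…,s_{q²−1}). Then the cardinality #Γ_{s_0,(s_1,…,s_{q²−1}),t} is invariant under permutations of the full sequence (s_0, s_1, …, s_{q²−1}): if (s'_0, s'_1, …, s'_{q²−1}) is a permutation of (s_0, s_1, …, s_{q²−1}), then #Γ_{s_0,(s_1,…,s_{q²−1}),t} = #Γ_{s'_0,(s'_1,…,s'_{q²−1}),t}. -/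
def OmegaSet (q : ℕ) (hq : 0 < q) (m : ℤ) (r : Fin q → ℤ) (s : Fin (q ^ 2 - 1) → ℤ)
    (t : ℤ) : Set (ℤ × (Fin (q - 1) → ℤ) × (Fin (q ^ 2 - 1) → ℤ)) :=
  {p | 0 ≤ p.1 + r ⟨0, hq⟩ ∧
    (∀ μ : Fin (q - 1),
      0 ≤ p.1 + m * ((q : ℤ) + 1) * p.2.1 μ + r ⟨μ.val + 1, by have := μ.isLt; omega⟩ ∧
      p.1 + m * ((q : ℤ) + 1) * p.2.1 μ + r ⟨μ.val + 1, by have := μ.isLt; omega⟩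
        < m * ((q : ℤ) + 1)) ∧
    (∀ ν : Fin (q ^ 2 - 1), 0 ≤ p.1 + m * p.2.2 ν + s ν ∧ p.1 + m * p.2.2 ν + s ν < m) ∧
    (q : ℤ) ^ 3 * p.1 + m * ((q : ℤ) + 1) * (∑ μ, p.2.1 μ)
      + m * (q : ℤ) * (∑ ν, p.2.2 ν) ≤ t}

private lemma emod_mul_decomp (x m c : ℤ) (hm : 0 < m) (hc : 0 < c) :
    x % (m * c) = m * (x / m % c) + x % m := by
  have h1 := Int.mul_ediv_add_emod x m
  have h2 := Int.mul_ediv_add_emod (x / m) c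
  have key : x - (m * (x / m % c) + x % m) = m * c * (x / m / c) := by
    linear_combination - h1 - m * h2
  have h3 : x % (m * c) = (m * (x / m % c) + x % m) % (m * c) := by
    rw [Int.emod_eq_emod_iff_emod_sub_eq_zero, key]
    exact Int.mul_emod_right _ _
  rw [h3, Int.emod_eq_of_lt]
  · have h5 := Int.emod_nonneg x (ne_of_gt hm)
    have h6 := Int.emod_nonneg (x / m) (ne_of_gt hc)
    nlinarith
  · have hx := Int.emod_lt_of_pos x hm
    have h4 := Int.emod_lt_of_pos (x / m) hc
    have h6 := Int.emod_nonneg (x / m) (ne_of_gt hc)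
    nlinarith

private lemma eq_neg_ediv {x M j : ℤ} (hM : 0 < M) (h0 : 0 ≤ x + M * j)
    (h1 : x + M * j < M) : j = -(x / M) := by
  have h2 : (x + M * j) % M = x + M * j := Int.emod_eq_of_lt h0 h1
  have h3 : (x + M * j) % M = x % M := Int.add_mul_emod_self_left ..
  have h4 : x % M = x - M * (x / M) := Int.emod_def x M
  have h5 : M * j = M * (-(x / M)) := by linear_combination - h2 + h3 + h4
  exact mul_left_cancel₀ (ne_of_gt hM) h5

private lemma mem_omega_iff (q : ℕ) (hq : 0 < q) (m : ℤ) (hm : 0 < m)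
    (s0 : ℤ) (s : Fin (q ^ 2 - 1) → ℤ) (t : ℤ)
    (p : ℤ × (Fin (q - 1) → ℤ) × (Fin (q ^ 2 - 1) → ℤ)) :
    p ∈ OmegaSet q hq m (fun _ => s0) s t ↔
      0 ≤ p.1 + s0 ∧
      (∀ μ, p.2.1 μ = -((p.1 + s0) / (m * ((q : ℤ) + 1)))) ∧
      (∀ ν, p.2.2 ν = -((p.1 + s ν) / m)) ∧
      (q : ℤ) ^ 3 * p.1 + m * ((q : ℤ) + 1) * (∑ μ, p.2.1 μ)
        + m * (q : ℤ) * (∑ ν, p.2.2 ν) ≤ t := by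
  have hM : 0 < m * ((q : ℤ) + 1) := by positivity
  simp only [OmegaSet, Set.mem_setOf_eq]
  constructor
  · rintro ⟨h0, hj, hk, hV⟩
    refine ⟨h0, fun μ => ?_, fun ν => ?_, hV⟩
    · refine eq_neg_ediv hM ?_ ?_
      · have := (hj μ).1; linarith
      · have := (hj μ).2; linarith
    · refine eq_neg_ediv hm ?_ ?_
      · have := (hk ν).1; linarith
      · have := (hk ν).2; linarith
  · rintro ⟨h0, hj, hk, hV⟩
    refine ⟨h0, fun μ => ?_, fun ν => ?_, hV⟩
    · have key : p.1 + m * ((q : ℤ) + 1) * p.2.1 μ + s0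
          = (p.1 + s0) % (m * ((q : ℤ) + 1)) := by
        rw [hj μ, Int.emod_def]; ring
      rw [key]
      exact ⟨Int.emod_nonneg _ (ne_of_gt hM), Int.emod_lt_of_pos _ hM⟩
    · have key : p.1 + m * p.2.2 ν + s ν = (p.1 + s ν) % m := by
        rw [hk ν, Int.emod_def]; ring
      rw [key]
      exact ⟨Int.emod_nonneg _ (ne_of_gt hm), Int.emod_lt_of_pos _ hm⟩

private lemma value_formula (q : ℕ) (hq1 : 1 ≤ q) (m : ℤ) (hm : 0 < m)
    (s0 : ℤ) (s : Fin (q ^ 2 - 1) → ℤ) (i : ℤ)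
    (j : Fin (q - 1) → ℤ) (k : Fin (q ^ 2 - 1) → ℤ)
    (hj : ∀ μ, j μ = -((i + s0) / (m * ((q : ℤ) + 1))))
    (hk : ∀ ν, k ν = -((i + s ν) / m)) :
    (q : ℤ) ^ 3 * i + m * ((q : ℤ) + 1) * (∑ μ, j μ) + m * (q : ℤ) * (∑ ν, k ν)
      = m * ((i + s0) / m) + ((q : ℤ) - 1) * m * ((i + s0) / m % ((q : ℤ) + 1))
        + (q : ℤ) * (∑ α : Fin (q ^ 2 - 1 + 1),
            ((i + (Fin.cons s0 s : Fin (q ^ 2 - 1 + 1) → ℤ) α) % m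
              - (Fin.cons s0 s : Fin (q ^ 2 - 1 + 1) → ℤ) α)) := by
  have hq2 : 1 ≤ q ^ 2 := Nat.one_le_pow _ _ hq1
  have e1 : ∑ μ : Fin (q - 1), j μ
      = ((q : ℤ) - 1) * -((i + s0) / (m * ((q : ℤ) + 1))) := by
    simp only [hj]
    rw [Finset.sum_const, Finset.card_univ, Fintype.card_fin, nsmul_eq_mul]
    congr 1
    push_cast [Nat.cast_sub hq1]
    ring
  have e2 : m * ∑ ν : Fin (q ^ 2 - 1), k ν
      = (∑ ν : Fin (q ^ 2 - 1), ((i + s ν) % m - s ν)) - ((q : ℤ) ^ 2 - 1) * i := by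
    rw [Finset.mul_sum]
    have hterm : ∀ ν : Fin (q ^ 2 - 1), m * k ν = ((i + s ν) % m - s ν) - i := by
      intro ν; rw [hk ν, Int.emod_def]; ring
    rw [Finset.sum_congr rfl fun ν _ => hterm ν, Finset.sum_sub_distrib,
      Finset.sum_const, Finset.card_univ, Fintype.card_fin, nsmul_eq_mul]
    congr 1
    push_cast [Nat.cast_sub hq2]
    ring
  have e3 : ∑ α : Fin (q ^ 2 - 1 + 1),
        ((i + (Fin.cons s0 s : Fin (q ^ 2 - 1 + 1) → ℤ) α) % m
          - (Fin.cons s0 s : Fin (q ^ 2 - 1 + 1) → ℤ) α)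
      = ((i + s0) % m - s0) + ∑ ν : Fin (q ^ 2 - 1), ((i + s ν) % m - s ν) := by
    rw [Fin.sum_univ_succ]
    simp
  have hA := Int.mul_ediv_add_emod (i + s0) m
  have hB := emod_mul_decomp (i + s0) m ((q : ℤ) + 1) hm (by positivity)
  have hC := Int.emod_def (i + s0) (m * ((q : ℤ) + 1))
  linear_combination (m * ((q : ℤ) + 1)) * e1 + (q : ℤ) * e2 - (q : ℤ) * e3
    - hA + ((q : ℤ) - 1) * hB - ((q : ℤ) - 1) * hC

private def phiMap (q : ℕ) (m s0 s0' : ℤ) (s' : Fin (q ^ 2 - 1) → ℤ)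
    (p : ℤ × (Fin (q - 1) → ℤ) × (Fin (q ^ 2 - 1) → ℤ)) :
    ℤ × (Fin (q - 1) → ℤ) × (Fin (q ^ 2 - 1) → ℤ) :=
  (m * ((p.1 + s0) / m) + (p.1 + s0') % m - s0',
   fun _ => -((m * ((p.1 + s0) / m) + (p.1 + s0') % m - s0' + s0') / (m * ((q : ℤ) + 1))),
   fun ν => -((m * ((p.1 + s0) / m) + (p.1 + s0') % m - s0' + s' ν) / m))

private lemma phi_facts (m : ℤ) (hm : 0 < m) (s0 s0' i : ℤ) :
    (m * ((i + s0) / m) + (i + s0') % m - s0' + s0') / m = (i + s0) / m ∧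
    (∀ x : ℤ, (m * ((i + s0) / m) + (i + s0') % m - s0' + x) % m = (i + x) % m) := by
  set w := (i + s0) / m with hw
  set r := (i + s0') % m with hr
  have hr0 : 0 ≤ r := Int.emod_nonneg _ (ne_of_gt hm)
  have hr1 : r < m := Int.emod_lt_of_pos _ hm
  constructor
  · have h : m * w + r - s0' + s0' = r + w * m := by ring
    rw [h, Int.add_mul_ediv_right _ _ (ne_of_gt hm), Int.ediv_eq_zero_of_lt hr0 hr1,
      zero_add]
  · intro x
    have hΔ : m * w + r - s0' + x = (i + x) + m * (w - (i + s0') / m) := by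
      rw [hr, Int.emod_def]; ring
    rw [hΔ, Int.add_mul_emod_self_left]

private lemma phi_mapsTo (q : ℕ) (hq : 0 < q) (hq1 : 1 ≤ q) (m : ℤ) (hm : 0 < m)
    (s0 s0' : ℤ) (s s' : Fin (q ^ 2 - 1) → ℤ) (t : ℤ)
    (σ : Equiv.Perm (Fin (q ^ 2 - 1 + 1)))
    (hperm : (Fin.cons s0' s' : Fin (q ^ 2 - 1 + 1) → ℤ)
      = (Fin.cons s0 s : Fin (q ^ 2 - 1 + 1) → ℤ) ∘ σ) :
    Set.MapsTo (phiMap q m s0 s0' s') (OmegaSet q hq m (fun _ => s0) s t)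
      (OmegaSet q hq m (fun _ => s0') s' t) := by
  intro p hp
  rw [mem_omega_iff q hq m hm] at hp
  rw [mem_omega_iff q hq m hm]
  obtain ⟨h0, hj, hk, hV⟩ := hp
  obtain ⟨hdiv, hmod⟩ := phi_facts m hm s0 s0' p.1
  rw [show m * ((p.1 + s0) / m) + (p.1 + s0') % m - s0' = (phiMap q m s0 s0' s' p).1
    from rfl] at hdiv hmod
  refine ⟨?_, fun μ => rfl, fun ν => rfl, ?_⟩
  · have hw : 0 ≤ (p.1 + s0) / m := Int.ediv_nonneg h0 (le_of_lt hm)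
    have hr0 : 0 ≤ (p.1 + s0') % m := Int.emod_nonneg _ (ne_of_gt hm)
    have : (phiMap q m s0 s0' s' p).1 + s0'
        = m * ((p.1 + s0) / m) + (p.1 + s0') % m := by
      show m * ((p.1 + s0) / m) + (p.1 + s0') % m - s0' + s0' = _; ring
    rw [this]
    nlinarith
  · have hV' := value_formula q hq1 m hm s0' s' (phiMap q m s0 s0' s' p).1
      (phiMap q m s0 s0' s' p).2.1 (phiMap q m s0 s0' s' p).2.2
      (fun μ => rfl) (fun ν => rfl)
    have hsum : (∑ α : Fin (q ^ 2 - 1 + 1),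
          (((phiMap q m s0 s0' s' p).1
              + (Fin.cons s0' s' : Fin (q ^ 2 - 1 + 1) → ℤ) α) % m
            - (Fin.cons s0' s' : Fin (q ^ 2 - 1 + 1) → ℤ) α))
        = ∑ α : Fin (q ^ 2 - 1 + 1),
            ((p.1 + (Fin.cons s0 s : Fin (q ^ 2 - 1 + 1) → ℤ) α) % m
              - (Fin.cons s0 s : Fin (q ^ 2 - 1 + 1) → ℤ) α) := by
      rw [hperm]
      simp only [Function.comp_apply]
      rw [Finset.sum_congr rfl fun α _ => by
        rw [hmod ((Fin.cons s0 s : Fin (q ^ 2 - 1 + 1) → ℤ) (σ α))]]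
      exact Equiv.sum_comp σ (fun α =>
        (p.1 + (Fin.cons s0 s : Fin (q ^ 2 - 1 + 1) → ℤ) α) % m
          - (Fin.cons s0 s : Fin (q ^ 2 - 1 + 1) → ℤ) α)
    rw [hV', hdiv, hsum,
      ← value_formula q hq1 m hm s0 s p.1 p.2.1 p.2.2 hj hk]
    exact hV

private lemma phi_leftInv (q : ℕ) (hq : 0 < q) (m : ℤ) (hm : 0 < m)
    (s0 s0' : ℤ) (s s' : Fin (q ^ 2 - 1) → ℤ) (t : ℤ) :
    ∀ p ∈ OmegaSet q hq m (fun _ => s0) s t,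
      phiMap q m s0' s0 s (phiMap q m s0 s0' s' p) = p := by
  intro p hp
  rw [mem_omega_iff q hq m hm] at hp
  obtain ⟨h0, hj, hk, -⟩ := hp
  obtain ⟨hdiv, hmod⟩ := phi_facts m hm s0 s0' p.1
  have hi : (phiMap q m s0' s0 s (phiMap q m s0 s0' s' p)).1 = p.1 := by
    show m * ((m * ((p.1 + s0) / m) + (p.1 + s0') % m - s0' + s0') / m)
        + (m * ((p.1 + s0) / m) + (p.1 + s0') % m - s0' + s0) % m - s0 = p.1
    rw [hdiv, hmod]
    have := Int.mul_ediv_add_emod (p.1 + s0) m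
    linarith
  refine Prod.ext hi (Prod.ext (funext fun μ => ?_) (funext fun ν => ?_))
  · show -(((phiMap q m s0' s0 s (phiMap q m s0 s0' s' p)).1 + s0)
        / (m * ((q : ℤ) + 1))) = p.2.1 μ
    rw [hi, hj μ]
  · show -(((phiMap q m s0' s0 s (phiMap q m s0 s0' s' p)).1 + s ν) / m) = p.2.2 ν
    rw [hi, hk ν]

/-- Writing `Γ_{s₀,(s₁,…,s_{q²-1}),t} := Ω_{(s₀,…,s₀),(s₁,…,s_{q²-1}),t}` (constant
vector `r`), the cardinality `#Γ` is invariant under permutations of the full sequence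
`(s₀, s₁, …, s_{q²-1})`. -/
theorem card_GammaSet_perm (q n : ℕ) (hq : IsPrimePow q) (hn : Odd n) (hn1 : 1 < n)
    (m : ℤ) (hm : m * ((q : ℤ) + 1) = (q : ℤ) ^ n + 1)
    (s0 s0' : ℤ) (s s' : Fin (q ^ 2 - 1) → ℤ) (t : ℤ)
    (σ : Equiv.Perm (Fin (q ^ 2 - 1 + 1)))
    (hperm : (Fin.cons s0' s' : Fin (q ^ 2 - 1 + 1) → ℤ)
      = (Fin.cons s0 s : Fin (q ^ 2 - 1 + 1) → ℤ) ∘ σ) :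
    (OmegaSet q hq.pos m (fun _ => s0) s t).ncard
      = (OmegaSet q hq.pos m (fun _ => s0') s' t).ncard := by
  have hq1 : 1 ≤ q := hq.pos
  have hm0 : 0 < m := by
    have h1 : (0 : ℤ) < (q : ℤ) ^ n + 1 := by positivity
    have h2 : (0 : ℤ) < (q : ℤ) + 1 := by positivity
    nlinarith
  have hperm' : (Fin.cons s0 s : Fin (q ^ 2 - 1 + 1) → ℤ)
      = (Fin.cons s0' s' : Fin (q ^ 2 - 1 + 1) → ℤ) ∘ σ.symm := by
    funext a
    rw [hperm]
    simp
  have hbij : Set.BijOn (phiMap q m s0 s0' s')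
      (OmegaSet q hq.pos m (fun _ => s0) s t)
      (OmegaSet q hq.pos m (fun _ => s0') s' t) :=
    Set.InvOn.bijOn ⟨phi_leftInv q hq.pos m hm0 s0 s0' s s' t,
        phi_leftInv q hq.pos m hm0 s0' s0 s' s t⟩
      (phi_mapsTo q hq.pos hq1 m hm0 s0 s0' s s' t σ hperm)
      (phi_mapsTo q hq.pos hq1 m hm0 s0' s0 s' s t σ.symm hperm')
  rw [← hbij.image_eq, Set.ncard_image_of_injOn hbij.injOn]
end
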